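/- Let a, b, c be positive integers with a ≤ b, a + b odd (i.e., a and b of different parity), c even, and a² + b² < c². Then S(a,b,c) < 8π(a + b + c − 4) + 12π E(2√2/3). -/
import Mathlib

open Real

/-- Complete elliptic integral of the first kind. -/
noncomputable def completeEllipticK (k : ℝ) : ℝ :=
  ∫ θ in (0:ℝ)..(π/2), 1 / Real.sqrt (1 - k^2 * Real.sin θ ^ 2)

/-- Complete elliptic integral of the second kind. -/
noncomputable def completeEllipticE (k : ℝ) : ℝ :=
  ∫ θ in (0:ℝ)..(π/2), Real.sqrt (1 - k^2 * Real.sin θ ^ 2)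

/-- The area `S(a,b,c)` of the generalized Lawson surface `T_{a,b,c}`. -/
noncomputable def lawsonArea (a b c : ℝ) : ℝ :=
  4 * π / Real.sqrt (c^2 - a^2) *
    (2 * (c^2 - a^2) * completeEllipticE (Real.sqrt ((b^2 - a^2) / (c^2 - a^2)))
      - (c^2 - a^2 - b^2) * completeEllipticK (Real.sqrt ((b^2 - a^2) / (c^2 - a^2))))

lemma contE_aux (k : ℝ) : Continuous fun θ : ℝ => Real.sqrt (1 - k^2 * Real.sin θ ^ 2) :=
  Real.continuous_sqrt.comp (by continuity)

lemma ellipticE_le_pi_div_two (k : ℝ) : completeEllipticE k ≤ π / 2 := by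
  unfold completeEllipticE
  calc (∫ θ in (0:ℝ)..(π/2), Real.sqrt (1 - k^2 * Real.sin θ ^ 2))
      ≤ ∫ _θ in (0:ℝ)..(π/2), (1:ℝ) := by
        apply intervalIntegral.integral_mono_on (by positivity)
          ((contE_aux k).intervalIntegrable 0 (π/2)) intervalIntegrable_const
        intro θ _
        exact Real.sqrt_le_one.mpr (by nlinarith [sq_nonneg (k * Real.sin θ)])
    _ = π/2 := by simp

lemma pi_div_two_le_ellipticK {k : ℝ} (hk : k^2 < 1) : π/2 ≤ completeEllipticK k := by
  have hpos : ∀ θ : ℝ, 0 < 1 - k^2 * Real.sin θ ^ 2 := by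
    intro θ
    nlinarith [Real.sin_sq_le_one θ, sq_nonneg k, sq_nonneg (Real.sin θ)]
  have hcont : Continuous fun θ : ℝ => 1 / Real.sqrt (1 - k^2 * Real.sin θ ^ 2) := by
    apply Continuous.div continuous_const (contE_aux k)
    intro θ; exact (Real.sqrt_pos.mpr (hpos θ)).ne'
  unfold completeEllipticK
  calc π/2 = ∫ _θ in (0:ℝ)..(π/2), (1:ℝ) := by simp
    _ ≤ ∫ θ in (0:ℝ)..(π/2), 1 / Real.sqrt (1 - k^2 * Real.sin θ ^ 2) := by
        apply intervalIntegral.integral_mono_on (by positivity)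
          intervalIntegrable_const (hcont.intervalIntegrable 0 (π/2))
        intro θ _
        have h1 : 0 < Real.sqrt (1 - k^2 * Real.sin θ ^ 2) := Real.sqrt_pos.mpr (hpos θ)
        rw [le_div_iff₀ h1, one_mul]
        exact Real.sqrt_le_one.mpr (by nlinarith [sq_nonneg (k * Real.sin θ)])

lemma one_le_ellipticE {k : ℝ} (hk : k^2 ≤ 1) : 1 ≤ completeEllipticE k := by
  unfold completeEllipticE
  calc (1:ℝ) = ∫ θ in (0:ℝ)..(π/2), Real.cos θ := by rw [integral_cos]; simp
    _ ≤ ∫ θ in (0:ℝ)..(π/2), Real.sqrt (1 - k^2 * Real.sin θ ^ 2) := by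
        apply intervalIntegral.integral_mono_on (by positivity)
          (Real.continuous_cos.intervalIntegrable 0 (π/2))
          ((contE_aux k).intervalIntegrable 0 (π/2))
        intro θ hθ
        have hcos : 0 ≤ Real.cos θ :=
          Real.cos_nonneg_of_mem_Icc ⟨by linarith [hθ.1, Real.pi_pos], hθ.2⟩
        have h2 : Real.cos θ ^ 2 ≤ 1 - k^2 * Real.sin θ ^ 2 := by
          have := Real.sin_sq_add_cos_sq θ
          nlinarith [sq_nonneg (Real.sin θ)]
        calc Real.cos θ = Real.sqrt (Real.cos θ ^ 2) := (Real.sqrt_sq hcos).symm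
          _ ≤ _ := Real.sqrt_le_sqrt h2

lemma special_case (a b c : ℕ) (ha : 0 < a) (hb : 0 < b) (_hc : 0 < c) (hab : a ≤ b)
    (hodd : Odd (a + b)) (hceven : Even c) (hlt : a^2 + b^2 < c^2) (hbc : b + c ≤ 6) :
    a = 1 ∧ b = 2 ∧ c = 4 := by
  rw [Nat.odd_iff] at hodd
  rw [Nat.even_iff] at hceven
  have hb5 : b ≤ 5 := by omega
  have hc5 : c ≤ 5 := by omega
  interval_cases b <;> interval_cases c <;> interval_cases a <;> simp_all

lemma arith_main (aR bR cR t : ℝ) (ha1 : 1 ≤ aR) (hb1 : 1 ≤ bR) (h7R : 7 ≤ bR + cR)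
    (htpos : 0 < t) (hbt : bR < t) (htc : t ≤ cR) :
    π * (t^2 + bR^2) < (4*(aR+bR+cR) - 10) * t := by
  have hπ : π < 3.141593 := Real.pi_lt_d6
  have h3 : π * (bR+cR) ≤ 4*(aR+bR+cR) - 10 := by nlinarith
  have h1 : π * t^2 ≤ π * t * cR := by
    nlinarith [mul_le_mul_of_nonneg_left htc (mul_nonneg Real.pi_pos.le htpos.le)]
  have h2 : π * bR^2 < π * t * bR := by
    nlinarith [mul_lt_mul_of_pos_left hbt (mul_pos Real.pi_pos (by linarith : (0:ℝ) < bR))]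
  have h4 : π * t * (bR+cR) ≤ (4*(aR+bR+cR) - 10) * t := by
    nlinarith [mul_le_mul_of_nonneg_right h3 htpos.le]
  linarith

lemma arith_special (t : ℝ) (htpos : 0 < t) (ht15 : t^2 = 15) :
    π * (t^2 + (2:ℝ)^2) < (4*((1:ℝ)+2+4) - 10) * t := by
  have hπ : π < 3.15 := by linarith [Real.pi_lt_d6]
  have htl : (18/5:ℝ) < t := by nlinarith
  rw [ht15]
  norm_num
  linarith

lemma final_aux (s bR t : ℝ) (htpos : 0 < t)
    (key : π * (t^2 + bR^2) < (4*s - 10) * t) :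
    4*π/t * ((π/2) * (t^2 + bR^2)) < 8*π*(s-4) + 12*π := by
  rw [div_mul_eq_mul_div, div_lt_iff₀ htpos]
  nlinarith [mul_lt_mul_of_pos_left key (by positivity : (0:ℝ) < 2*π)]

set_option maxHeartbeats 800000 in
/-- For positive integers `a ≤ b` of different parity, `c` even, `a² + b² < c²`,
one has `S(a,b,c) < 8π(a+b+c−4) + 12πE(2√2/3)`. -/
theorem lawsonArea_lt_of_diff_parity (a b c : ℕ) (ha : 0 < a) (hb : 0 < b) (hc : 0 < c)
    (hab : a ≤ b) (hodd : Odd (a + b)) (hceven : Even c) (hlt : a^2 + b^2 < c^2) :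
    lawsonArea a b c < 8 * π * ((a:ℝ) + b + c - 4)
      + 12 * π * completeEllipticE (2 * Real.sqrt 2 / 3) := by
  have ha1 : (1:ℝ) ≤ a := by exact_mod_cast ha
  have hb1 : (1:ℝ) ≤ b := by exact_mod_cast hb
  have habR : (a:ℝ) ≤ b := by exact_mod_cast hab
  have hltR : (a:ℝ)^2 + (b:ℝ)^2 + 1 ≤ (c:ℝ)^2 := by exact_mod_cast Nat.succ_le_of_lt hlt
  set A : ℝ := (c:ℝ)^2 - (a:ℝ)^2 with hAdef
  have hApos : 0 < A := by rw [hAdef]; nlinarith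
  have hbA : (b:ℝ)^2 + 1 ≤ A := by rw [hAdef]; linarith
  set t : ℝ := Real.sqrt A with htdef
  have htpos : 0 < t := Real.sqrt_pos.mpr hApos
  have ht2 : t^2 = A := Real.sq_sqrt hApos.le
  have hbt : (b:ℝ) < t := by
    have hbb : (b:ℝ) = Real.sqrt ((b:ℝ)^2) := (Real.sqrt_sq (by positivity)).symm
    rw [hbb, htdef]
    exact Real.sqrt_lt_sqrt (by positivity) (by linarith)
  have htc : t ≤ (c:ℝ) := by
    rw [htdef]
    calc Real.sqrt A ≤ Real.sqrt ((c:ℝ)^2) := Real.sqrt_le_sqrt (by rw [hAdef]; nlinarith)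
      _ = c := Real.sqrt_sq (by positivity)
  set k : ℝ := Real.sqrt (((b:ℝ)^2 - (a:ℝ)^2) / A) with hkdef
  have hknn : 0 ≤ ((b:ℝ)^2 - (a:ℝ)^2) / A := div_nonneg (by nlinarith) hApos.le
  have hk2 : k^2 = ((b:ℝ)^2 - (a:ℝ)^2) / A := Real.sq_sqrt hknn
  have hk2lt : k^2 < 1 := by rw [hk2, div_lt_one hApos]; nlinarith
  have hE := ellipticE_le_pi_div_two k
  have hK := pi_div_two_le_ellipticK hk2lt
  clear_value k t A
  have hAb2 : 0 < A - (b:ℝ)^2 := by linarith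
  have hstep : lawsonArea a b c ≤ 4*π/t * ((π/2) * (A + (b:ℝ)^2)) := by
    unfold lawsonArea
    rw [← hAdef, ← hkdef, ← htdef]
    apply mul_le_mul_of_nonneg_left _ (by positivity : (0:ℝ) ≤ 4*π/t)
    have h1 : 2*A*completeEllipticE k ≤ 2*A*(π/2) :=
      mul_le_mul_of_nonneg_left hE (by positivity)
    have h2 : (A - (b:ℝ)^2)*(π/2) ≤ (A - (b:ℝ)^2)*completeEllipticK k :=
      mul_le_mul_of_nonneg_left hK hAb2.le
    linarith
  have key : π * (t^2 + (b:ℝ)^2) < (4*((a:ℝ)+b+c) - 10) * t := by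
    rcases le_or_gt 7 (b + c) with h7 | h7
    · exact arith_main a b c t ha1 hb1 (by exact_mod_cast h7) htpos hbt htc
    · obtain ⟨ha', hb', hc'⟩ := special_case a b c ha hb hc hab hodd hceven hlt (by omega)
      have haR : (a:ℝ) = 1 := by rw [ha']; norm_num
      have hbR : (b:ℝ) = 2 := by rw [hb']; norm_num
      have hcR : (c:ℝ) = 4 := by rw [hc']; norm_num
      have ht15 : t^2 = 15 := by rw [ht2, hAdef, haR, hcR]; norm_num
      rw [haR, hbR, hcR]
      exact arith_special t htpos ht15
  have hE1 : 1 ≤ completeEllipticE (2 * Real.sqrt 2 / 3) := by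
    apply one_le_ellipticE
    have h8 : (2 * Real.sqrt 2 / 3)^2 = 8/9 := by
      rw [div_pow, mul_pow, Real.sq_sqrt (by norm_num : (0:ℝ) ≤ 2)]
      norm_num
    rw [h8]; norm_num
  have hfin : 4*π/t * ((π/2) * (t^2 + (b:ℝ)^2)) < 8*π*((a:ℝ)+b+c-4) + 12*π := by
    have := final_aux ((a:ℝ)+b+c) b t htpos key
    linarith
  calc lawsonArea a b c ≤ 4*π/t * ((π/2) * (A + (b:ℝ)^2)) := hstep
    _ = 4*π/t * ((π/2) * (t^2 + (b:ℝ)^2)) := by rw [ht2]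
    _ < 8*π*((a:ℝ)+b+c-4) + 12*π := hfin
    _ ≤ 8 * π * ((a:ℝ) + b + c - 4) + 12 * π * completeEllipticE (2 * Real.sqrt 2 / 3) := by
        have h12 := mul_le_mul_of_nonneg_left hE1 (by positivity : (0:ℝ) ≤ 12*π)
        linarith
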